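/- Conversely, if 𝔥 is a vector space with a bilinear bracket and the rack bialgebra conditions hold for C = k·1 ⊕ 𝔥 (with 𝔥 primitive and ◁ defined by the bracket on 𝔥), then the self-distributivity condition (x ◁ y) ◁ z = (x ◁ z_{(1)}) ◁ (y ◁ z_{(2)}) for x,y,z ∈ 𝔥 is equivalent to the right Leibniz identity [[x,y],z] = [[x,z],y] + [x,[y,z]]. -/
import Mathlib


open TensorProduct

set_option maxHeartbeats 1000000

/-- A rack bialgebra over a field `k`: a counital coaugmented coalgebra
`(C, Δ, ε, 1)` together with a coalgebra morphism `◁ : C ⊗ C → C`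
(given here as a bilinear map `lhd`) which is self-distributive and satisfies
`x ◁ 1 = x`, `1 ◁ x = ε(x)·1` and `ε(x ◁ y) = ε(x)ε(y)`. -/
structure RackBialgebra (k C : Type) [Field k] [AddCommGroup C] [Module k C] where
  comul : C →ₗ[k] C ⊗[k] C
  counit : C →ₗ[k] k
  one : C
  lhd : C →ₗ[k] C →ₗ[k] C
  coassoc : (TensorProduct.assoc k C C C).toLinearMap ∘ₗ
      TensorProduct.map comul LinearMap.id ∘ₗ comul =
    TensorProduct.map LinearMap.id comul ∘ₗ comul
  counit_comul : (TensorProduct.lid k C).toLinearMap ∘ₗ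
      TensorProduct.map counit LinearMap.id ∘ₗ comul = LinearMap.id
  comul_counit : (TensorProduct.rid k C).toLinearMap ∘ₗ
      TensorProduct.map LinearMap.id counit ∘ₗ comul = LinearMap.id
  comul_one : comul one = one ⊗ₜ[k] one
  counit_one : counit one = 1
  lhd_one : ∀ a, lhd a one = a
  one_lhd : ∀ a, lhd one a = counit a • one
  counit_lhd : ∀ a b, counit (lhd a b) = counit a * counit b
  lhd_coalgebra_morphism : comul ∘ₗ TensorProduct.lift lhd =
    TensorProduct.map (TensorProduct.lift lhd) (TensorProduct.lift lhd) ∘ₗ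
      (TensorProduct.tensorTensorTensorComm k C C C C).toLinearMap ∘ₗ
      TensorProduct.map comul comul
  self_distrib : TensorProduct.lift lhd ∘ₗ
      TensorProduct.map (TensorProduct.lift lhd) LinearMap.id =
    TensorProduct.lift lhd ∘ₗ
      TensorProduct.map (TensorProduct.lift lhd) (TensorProduct.lift lhd) ∘ₗ
      (TensorProduct.tensorTensorTensorComm k C C C C).toLinearMap ∘ₗ
      TensorProduct.map LinearMap.id comul

/-- Cocommutativity of the underlying coalgebra of a rack bialgebra. -/
def RackBialgebra.Cocommutative {k C : Type} [Field k] [AddCommGroup C]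
    [Module k C] (R : RackBialgebra k C) : Prop :=
  (TensorProduct.comm k C C).toLinearMap ∘ₗ R.comul = R.comul



variable (k : Type) [Field k] (V : Type) [AddCommGroup V] [Module k V]

/-- The coaugmentation `1` of the counitisation `C = k ⊕ V`. -/
def oneL : k × V := (1, 0)

/-- The counit of the counitisation `C = k ⊕ V`. -/
def counitL : (k × V) →ₗ[k] k := LinearMap.fst k k V

/-- The coproduct of the counitisation `C = k ⊕ V` of the coalgebra `V` with
zero coproduct: `Δ(a, x) = a·(1 ⊗ 1) + 1 ⊗ x + x ⊗ 1` (all elements of `V`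
are primitive and `1 = (1,0)` is group-like). -/
noncomputable def comulL : (k × V) →ₗ[k] (k × V) ⊗[k] (k × V) :=
  (LinearMap.toSpanSingleton k ((k × V) ⊗[k] (k × V))
      (oneL k V ⊗ₜ[k] oneL k V)) ∘ₗ LinearMap.fst k k V +
  ((TensorProduct.mk k (k × V) (k × V) (oneL k V)) ∘ₗ LinearMap.inr k k V +
    ((TensorProduct.mk k (k × V) (k × V)).flip (oneL k V)) ∘ₗ
      LinearMap.inr k k V) ∘ₗ LinearMap.snd k k V

/-- The rack product on `C = k ⊕ 𝔥` induced by a bilinear bracket `β` on `𝔥`: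
`(a·1 + x) ◁ (b·1 + y) = ab·1 + b·x + [x, y]`. -/
def lhdL (β : V →ₗ[k] V →ₗ[k] V) : (k × V) →ₗ[k] (k × V) →ₗ[k] (k × V) :=
  LinearMap.mk₂ k (fun c d => (c.1 * d.1, d.1 • c.2 + β c.2 d.2))
    (fun m₁ m₂ n => by
      apply Prod.ext <;> simp [add_mul, smul_add] <;> abel)
    (fun a m n => by
      apply Prod.ext
      · simp [Prod.smul_fst, smul_eq_mul]; ring
      · simp [Prod.smul_fst, Prod.smul_snd, smul_eq_mul, smul_add, mul_smul,
          smul_comm a n.1 m.2])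
    (fun m n₁ n₂ => by
      apply Prod.ext <;> simp [mul_add, add_smul] <;> abel)
    (fun a m n => by
      apply Prod.ext
      · simp [Prod.smul_fst, smul_eq_mul]; ring
      · simp [Prod.smul_fst, Prod.smul_snd, smul_eq_mul, smul_add, mul_smul])

/-- for a bilinear bracket `β` on `𝔥`, the self-distributivity
condition `(x ◁ y) ◁ z = (x ◁ z₁) ◁ (y ◁ z₂)` on `C = k·1 ⊕ 𝔥` (with `𝔥`
primitive and `◁` defined from the bracket) is equivalent to the right Leibniz
identity `[[x,y],z] = [[x,z],y] + [x,[y,z]]`. -/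
theorem self_distributive_iff_leibniz (k V : Type) [Field k] [AddCommGroup V]
    [Module k V] (β : V →ₗ[k] V →ₗ[k] V) :
    (TensorProduct.lift (lhdL k V β) ∘ₗ
        TensorProduct.map (TensorProduct.lift (lhdL k V β)) LinearMap.id =
      TensorProduct.lift (lhdL k V β) ∘ₗ
        TensorProduct.map (TensorProduct.lift (lhdL k V β))
          (TensorProduct.lift (lhdL k V β)) ∘ₗ
        (TensorProduct.tensorTensorTensorComm k (k × V) (k × V) (k × V)
          (k × V)).toLinearMap ∘ₗ
        TensorProduct.map LinearMap.id (comulL k V)) ↔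
    (∀ x y z : V, β (β x y) z = β (β x z) y + β x (β y z)) := by
  constructor
  · intro h x y z
    have h1 := congrArg (fun f : ((k × V) ⊗[k] (k × V)) ⊗[k] (k × V) →ₗ[k] (k × V) =>
      f ((((0 : k), x) ⊗ₜ[k] ((0 : k), y)) ⊗ₜ[k] ((0 : k), z))) h
    simp only [LinearMap.comp_apply, TensorProduct.map_tmul, TensorProduct.lift.tmul,
      LinearMap.id_apply, LinearEquiv.coe_coe, TensorProduct.tensorTensorTensorComm_tmul,
      comulL, lhdL, oneL, LinearMap.add_apply, LinearMap.coe_mk, LinearMap.mk₂_apply,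
      LinearMap.toSpanSingleton_apply, LinearMap.fst_apply, LinearMap.snd_apply,
      LinearMap.inr_apply, TensorProduct.mk_apply, LinearMap.flip_apply,
      TensorProduct.tmul_add, TensorProduct.add_tmul, map_add, map_smul,
      TensorProduct.smul_tmul', TensorProduct.smul_tmul] at h1
    have h2 := congrArg Prod.snd h1
    simp only [Prod.snd_add, Prod.smul_snd, smul_eq_mul, mul_zero, zero_mul, zero_smul,
      smul_zero, map_zero, LinearMap.zero_apply, zero_add, add_zero, one_smul,
      mul_one, one_mul, Prod.snd_zero] at h2
    linear_combination (norm := abel) h2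
  · intro h
    apply TensorProduct.ext'
    intro cd e
    induction cd using TensorProduct.induction_on with
    | zero => simp
    | add u v hu hv => simp_all [TensorProduct.add_tmul]
    | tmul c d =>
      obtain ⟨a, x⟩ := c; obtain ⟨b, y⟩ := d; obtain ⟨cc, z⟩ := e
      simp only [LinearMap.comp_apply, TensorProduct.map_tmul, TensorProduct.lift.tmul,
        LinearMap.id_apply, LinearEquiv.coe_coe,
        comulL, lhdL, oneL, LinearMap.add_apply, LinearMap.coe_mk, LinearMap.mk₂_apply,
        LinearMap.toSpanSingleton_apply, LinearMap.fst_apply, LinearMap.snd_apply,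
        LinearMap.inr_apply, TensorProduct.mk_apply, LinearMap.flip_apply,
        TensorProduct.tmul_add, TensorProduct.add_tmul, map_add, map_smul,
        TensorProduct.smul_tmul', TensorProduct.smul_tmul,
        TensorProduct.tensorTensorTensorComm_tmul]
      apply Prod.ext
      · simp [Prod.smul_fst]; ring
      · simp only [Prod.snd_add, Prod.smul_snd, smul_eq_mul, mul_zero, zero_mul,
          zero_smul, smul_zero, map_zero, LinearMap.zero_apply, zero_add, add_zero,
          one_smul, mul_one, one_mul, Prod.snd_zero, map_add, map_smul, smul_add,
          LinearMap.add_apply, LinearMap.smul_apply, h x y z, mul_smul]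
        module
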